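/- Let G and H be graphs with 2s+1 < og(H). Then there is a homomorphism from S_{2s+1}(G) to H if and only if there is a homomorphism from G to H^{2s+1}. -/

import Mathlib

structure SimpleGraphS where
  V : Type
  Adj : V → V → Prop
  symm : ∀ u v, Adj u v → Adj v u

namespace SimpleGraphS

/-- There is a walk of length exactly `n` from `u` to `v`. -/
def walkLen (G : SimpleGraphS) : ℕ → G.V → G.V → Prop
  | 0, u, v => u = v
  | n+1, u, v => ∃ w, G.Adj u w ∧ G.walkLen n w v

theorem walkLen_concat (G : SimpleGraphS) : ∀ (n : ℕ) (u v w : G.V),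
    G.walkLen n u v → G.Adj v w → G.walkLen (n+1) u w := by
  intro n
  induction n with
  | zero =>
      intro u v w h hadj
      cases h
      exact ⟨w, hadj, rfl⟩
  | succ n ih =>
      rintro u v w ⟨x, hux, hxv⟩ hadj
      exact ⟨x, hux, ih x v w hxv hadj⟩

theorem walkLen_symm (G : SimpleGraphS) : ∀ (n : ℕ) (u v : G.V),
    G.walkLen n u v → G.walkLen n v u := by
  intro n
  induction n with
  | zero => intro u v h; exact h.symm
  | succ n ih =>
      rintro u v ⟨w, huw, hwv⟩
      exact G.walkLen_concat n v w u (ih w v hwv) (G.symm u w huw)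

/-- The `k`-th power of a graph: same vertices, adjacency = existence of a
walk of length exactly `k` (loops allowed). -/
def pow (G : SimpleGraphS) (k : ℕ) : SimpleGraphS where
  V := G.V
  Adj u v := G.walkLen k u v
  symm := G.walkLen_symm k

/-- Existence of a graph homomorphism. -/
def homTo (G H : SimpleGraphS) : Prop :=
  ∃ f : G.V → H.V, ∀ u v, G.Adj u v → H.Adj (f u) (f v)

/-- The `(2s+1)`-subdivision `S_{2s+1}(G)`: every edge is replaced by a path
of length `2s+1`.  Following the paper's notation, the ordered pair `(u,v)`
(with `u ~ v`) carries the `s` inner vertices `(uv)_1, …, (uv)_s`. -/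
def subdiv (G : SimpleGraphS) (s : ℕ) : SimpleGraphS where
  V := G.V ⊕ ({p : G.V × G.V // G.Adj p.1 p.2} × Fin s)
  Adj x y :=
    match x, y with
    | Sum.inl u, Sum.inl v => s = 0 ∧ G.Adj u v
    | Sum.inl u, Sum.inr (e, k) => u = e.1.2 ∧ (k : ℕ) = s - 1
    | Sum.inr (e, k), Sum.inl u => u = e.1.2 ∧ (k : ℕ) = s - 1
    | Sum.inr (e, k), Sum.inr (e', l) =>
        e'.1.1 = e.1.2 ∧ e'.1.2 = e.1.1 ∧
        ((k : ℕ) + (l : ℕ) + 2 = s ∨ (k : ℕ) + (l : ℕ) + 2 = s + 1)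
  symm := by
    rintro (u | ⟨e, k⟩) (v | ⟨e', l⟩) h
    · exact ⟨h.1, G.symm _ _ h.2⟩
    · exact h
    · exact h
    · obtain ⟨h1, h2, h3⟩ := h
      exact ⟨h2.symm, h1.symm, by omega⟩

/-- `q < og(G)`: the rational `q` is smaller than the odd girth of `G`
(the length of a shortest odd closed walk; vacuously true if `G` is bipartite). -/
def ltOddGirth (G : SimpleGraphS) (q : ℚ) : Prop :=
  ∀ n : ℕ, Odd n → (∃ v, G.walkLen n v v) → q < (n : ℚ)

/-- A graph is non-bipartite iff it contains an odd closed walk. -/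
def Nonbipartite (G : SimpleGraphS) : Prop :=
  ∃ (n : ℕ) (v : G.V), Odd n ∧ G.walkLen n v v

/-- The odd girth, as an extended natural number (`⊤` for bipartite graphs). -/
noncomputable def oddGirth (G : SimpleGraphS) : ℕ∞ :=
  sInf {N : ℕ∞ | ∃ n : ℕ, N = (n : ℕ∞) ∧ Odd n ∧ ∃ v, G.walkLen n v v}

/-- The complete graph on `m` vertices. -/
def completeGraph (m : ℕ) : SimpleGraphS :=
  ⟨Fin m, fun u v => u ≠ v, fun _ _ h => h.symm⟩

/-- The chromatic number: least `m` such that `G` maps homomorphically to `K_m`. -/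
noncomputable def chromatic (G : SimpleGraphS) : ℕ :=
  sInf {m : ℕ | G.homTo (completeGraph m)}

/-- The `i`-th power thickness
`θ_i(G) = sup { (2r+1)/(2s+1) | χ(G^{(2r+1)/(2s+1)}) ≤ χ(G)+i, (2r+1)/(2s+1) < og(G) }`. -/
noncomputable def powerThickness (G : SimpleGraphS) (i : ℤ) : ℝ :=
  sSup {x : ℝ | ∃ r s : ℕ, x = (2*(r:ℝ)+1)/(2*(s:ℝ)+1) ∧
    ((((G.subdiv s).pow (2*r+1)).chromatic : ℤ) ≤ (G.chromatic : ℤ) + i) ∧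
    G.ltOddGirth ((2*(r:ℚ)+1)/(2*(s:ℚ)+1))}

/-- The graph `H^{-1/(2r+1)}`. -/
def negPow (H : SimpleGraphS) (r : ℕ) : SimpleGraphS where
  V := {A : Fin (r+1) → Set H.V //
        (∃ v, A 0 = {v}) ∧
        ∀ i : Fin (r+1), (A i).Nonempty ∧ A i ⊆ {u | ∃ v ∈ A 0, H.walkLen i v u}}
  Adj A B :=
    (∀ i j : Fin (r+1), (j : ℕ) = (i : ℕ) + 1 → A.1 i ⊆ B.1 j ∧ B.1 i ⊆ A.1 j) ∧
    ∀ j : Fin (r+1), ∀ a ∈ A.1 j, ∀ b ∈ B.1 j, H.Adj a b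
  symm := by
    rintro A B ⟨h1, h2⟩
    exact ⟨fun i j hij => ⟨(h1 i j hij).2, (h1 i j hij).1⟩,
           fun j b hb a ha => H.symm _ _ (h2 j a ha b hb)⟩

/-- The circular complete graph `K_{n/d}`. -/
def circGraph (n d : ℕ) : SimpleGraphS where
  V := Fin n
  Adj u v := (d : ℤ) ≤ |(u : ℤ) - (v : ℤ)| ∧ |(u : ℤ) - (v : ℤ)| ≤ (n : ℤ) - d
  symm := by
    intro u v h
    rwa [abs_sub_comm]

/-- The circular chromatic number, as a real number. -/
noncomputable def circChrom (G : SimpleGraphS) : ℝ :=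
  sInf {x : ℝ | ∃ n d : ℕ, 0 < d ∧ 2 * d ≤ n ∧ Nat.gcd n d = 1 ∧
    x = (n : ℝ) / (d : ℝ) ∧ G.homTo (circGraph n d)}

/-- The cycle on `m` vertices. -/
def cycleGraph (m : ℕ) : SimpleGraphS :=
  ⟨ZMod m, fun i j => i = j + 1 ∨ j = i + 1, fun _ _ h => h.symm⟩

/-- SimpleGraphS isomorphism. -/
def Isom (G H : SimpleGraphS) : Prop :=
  ∃ f : G.V ≃ H.V, ∀ u v, G.Adj u v ↔ H.Adj (f u) (f v)

/-- The helical graph `H(m,n,k)`. -/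
def helical (m n k : ℕ) : SimpleGraphS where
  V := {A : Fin k → Set (Fin m) //
        (∀ h : 0 < k, (A ⟨0, h⟩).ncard = n) ∧
        (∀ i, n ≤ (A i).ncard) ∧
        (∀ i : Fin k, ∀ h : (i : ℕ) + 1 < k, A i ∩ A ⟨(i : ℕ) + 1, h⟩ = ∅) ∧
        (∀ i : Fin k, ∀ h : (i : ℕ) + 2 < k, A i ⊆ A ⟨(i : ℕ) + 2, h⟩)}
  Adj A B :=
    (∀ i, A.1 i ∩ B.1 i = ∅) ∧
    (∀ i : Fin k, ∀ h : (i : ℕ) + 1 < k,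
      A.1 i ⊆ B.1 ⟨(i : ℕ) + 1, h⟩ ∧ B.1 i ⊆ A.1 ⟨(i : ℕ) + 1, h⟩)
  symm := by
    rintro A B ⟨h1, h2⟩
    refine ⟨fun i => ?_, fun i h => ⟨(h2 i h).2, (h2 i h).1⟩⟩
    rw [Set.inter_comm]
    exact h1 i

/-- A graph with chromatic number `k` is colorful if every proper `k`-coloring
admits a (nonempty) induced subgraph all of whose vertices see all `k` colors in
their closed neighborhood. -/
def Colorful (G : SimpleGraphS) : Prop :=
  ∀ c : G.V → Fin G.chromatic, (∀ u v, G.Adj u v → c u ≠ c v) →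
    ∃ S : Set G.V, S.Nonempty ∧
      ∀ v ∈ S, ∀ col : Fin G.chromatic,
        ∃ u ∈ S, (u = v ∨ G.Adj v u) ∧ c u = col

end SimpleGraphS

/-!
Restricting a homomorphism `S_{2s+1}(G) → H` to the branch vertices sends the subdivided path
of each edge `uv` to a walk of length `2s+1` from the image of `u` to that of `v`. Conversely,
given `f : G → H^{2s+1}`, choose for each edge `uv` a walk of length `2s+1` from `f u` to `f v`,
in such a way that the walk chosen for `vu` is the reverse of the one for `uv`, and lay it along
the subdivided path. This consistency is impossible on a loop, but a loop at `u` would give a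
closed walk of odd length `2s+1` at `f u`, which the odd-girth bound excludes.
-/

namespace SimpleGraphS

structure IsWalkSeq (G : SimpleGraphS) (n : ℕ) (a b : G.V) (w : ℕ → G.V) : Prop where
  zero : w 0 = a
  last : w n = b
  adj : ∀ i < n, G.Adj (w i) (w (i + 1))

variable {G H : SimpleGraphS}

theorem walkLen_iff_exists_isWalkSeq {n : ℕ} {a b : G.V} :
    G.walkLen n a b ↔ ∃ w, G.IsWalkSeq n a b w := by
  induction n generalizing a with
  | zero =>
    exact ⟨fun hab => ⟨fun _ => a, rfl, hab, nofun⟩, fun ⟨_, hw⟩ => hw.zero ▸ hw.last⟩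
  | succ n ih =>
    constructor
    · rintro ⟨c, hac, hcb⟩
      obtain ⟨w, hw⟩ := ih.1 hcb
      refine ⟨fun | 0 => a | i + 1 => w i, rfl, hw.last, ?_⟩
      rintro (_ | i) hi
      · simpa [hw.zero] using hac
      · exact hw.adj i (by omega)
    · rintro ⟨w, hw⟩
      exact ⟨w 1, hw.zero ▸ hw.adj 0 (by omega),
        ih.2 ⟨fun i => w (i + 1), rfl, hw.last, fun i hi => hw.adj (i + 1) (by omega)⟩⟩

theorem IsWalkSeq.reverse {n : ℕ} {a b : G.V} {w : ℕ → G.V} (hw : G.IsWalkSeq n a b w) :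
    G.IsWalkSeq n b a (fun i => w (n - i)) where
  zero := by simpa using hw.last
  last := by simpa using hw.zero
  adj i hi := by
    have hstep := G.symm _ _ (hw.adj (n - (i + 1)) (by omega))
    rwa [show n - (i + 1) + 1 = n - i by omega] at hstep

theorem IsWalkSeq.map {n : ℕ} {a b : G.V} {w : ℕ → G.V} {g : G.V → H.V}
    (hg : ∀ u v, G.Adj u v → H.Adj (g u) (g v)) (hw : G.IsWalkSeq n a b w) :
    H.IsWalkSeq n (g a) (g b) (g ∘ w) :=
  ⟨congrArg g hw.zero, congrArg g hw.last, fun i hi => hg _ _ (hw.adj i hi)⟩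

theorem not_walkLen_self_of_ltOddGirth {n : ℕ} (hn : Odd n) (h : H.ltOddGirth n) (a : H.V) :
    ¬ H.walkLen n a a :=
  fun ha => lt_irrefl _ (h n hn ⟨a, ha⟩)

/-- Orienting each pair by a linear order makes the choice of walks consistent under reversal. -/
theorem exists_walkSeqs_reverse_eq {n : ℕ} {f : G.V → H.V}
    (hf : ∀ u v, G.Adj u v → H.walkLen n (f u) (f v)) :
    ∃ W : G.V → G.V → ℕ → H.V,
      (∀ u v, G.Adj u v → H.IsWalkSeq n (f u) (f v) (W u v)) ∧
      ∀ u v, u ≠ v → ∀ i ≤ n, W v u i = W u v (n - i) := by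
  classical
  let : LinearOrder G.V := linearOrderOfSTO WellOrderingRel
  have hwalk : ∀ u v, ∃ w, G.Adj u v → H.IsWalkSeq n (f u) (f v) w := fun u v =>
    if huv : G.Adj u v then (walkLen_iff_exists_isWalkSeq.1 (hf u v huv)).imp fun _ hw _ => hw
    else ⟨fun _ => f u, fun h => absurd h huv⟩
  choose c hc using hwalk
  refine ⟨fun u v => if u < v then c u v else fun i => c v u (n - i), fun u v huv => ?_,
    fun u v hne i hi => ?_⟩
  · dsimp only
    split_ifs
    · exact hc u v huv
    · exact (hc v u (G.symm u v huv)).reverse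
  · rcases hne.lt_or_gt with huv | hvu
    · simp [huv, huv.not_gt]
    · simp [hvu, hvu.not_gt, Nat.sub_sub_self hi]

/-- The subdivided path of the edge `uv` in `S_{2s+1}(G)`, as a sequence of vertices: its inner
vertices alternate between the two orientations, position `2k+2` being `(uv)_k` and position
`2k+1` being `(vu)_{s-1-k}`. -/
def subdivPath (s : ℕ) {u v : G.V} (huv : G.Adj u v) (i : ℕ) :
    G.V ⊕ ({p : G.V × G.V // G.Adj p.1 p.2} × Fin s) :=
  if h0 : i = 0 then Sum.inl u
  else if hi : i < 2 * s + 1 then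
    if i % 2 = 0 then Sum.inr (⟨(u, v), huv⟩, ⟨i / 2 - 1, by omega⟩)
    else Sum.inr (⟨(v, u), G.symm u v huv⟩, ⟨s - 1 - i / 2, by omega⟩)
  else Sum.inl v

section subdivPath

variable {s : ℕ} {u v : G.V} (huv : G.Adj u v)

theorem subdivPath_zero : subdivPath s huv 0 = Sum.inl u := rfl

theorem subdivPath_of_le {i : ℕ} (hi : 2 * s + 1 ≤ i) : subdivPath s huv i = Sum.inl v := by
  unfold subdivPath
  split_ifs <;> first | rfl | omega

theorem subdivPath_two_mul_add_two (k : Fin s) :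
    subdivPath s huv (2 * k + 2) = Sum.inr (⟨(u, v), huv⟩, k) := by
  unfold subdivPath
  split_ifs <;> first | omega | (congr; omega)

theorem subdivPath_two_mul_add_one {k : ℕ} (l : Fin s) (hkl : k + l + 1 = s) :
    subdivPath s huv (2 * k + 1) = Sum.inr (⟨(v, u), G.symm u v huv⟩, l) := by
  unfold subdivPath
  split_ifs <;> first | omega | (congr; omega)

theorem isWalkSeq_subdivPath :
    (G.subdiv s).IsWalkSeq (2 * s + 1) (Sum.inl u) (Sum.inl v) (subdivPath s huv) where
  zero := subdivPath_zero huv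
  last := subdivPath_of_le huv le_rfl
  adj i hi := by
    rcases i with _ | i
    · rcases Nat.eq_zero_or_pos s with rfl | hs
      · rw [subdivPath_zero, subdivPath_of_le huv le_rfl]
        exact ⟨rfl, huv⟩
      · rw [subdivPath_zero,
          subdivPath_two_mul_add_one huv (k := 0) ⟨s - 1, by omega⟩ (by simp; omega)]
        exact ⟨rfl, rfl⟩
    obtain ⟨k, rfl | rfl⟩ := Nat.even_or_odd' i
    · rw [subdivPath_two_mul_add_one huv ⟨s - 1 - k, by omega⟩ (by simp; omega),
        subdivPath_two_mul_add_two huv ⟨k, by omega⟩]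
      exact ⟨rfl, rfl, Or.inr (by simp; omega)⟩
    · show (G.subdiv s).Adj (subdivPath s huv (2 * k + 2)) (subdivPath s huv (2 * (k + 1) + 1))
      rw [subdivPath_two_mul_add_two huv ⟨k, by omega⟩]
      rcases Nat.lt_or_ge (k + 1) s with hk | hk
      · rw [subdivPath_two_mul_add_one huv ⟨s - 2 - k, by omega⟩ (by simp; omega)]
        exact ⟨rfl, rfl, Or.inl (by simp; omega)⟩
      · rw [subdivPath_of_le huv (by omega)]
        exact ⟨rfl, by simp; omega⟩

theorem exists_subdivPath_of_adj {x y : (G.subdiv s).V} (hxy : (G.subdiv s).Adj x y) :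
    ∃ (u v : G.V) (huv : G.Adj u v), ∃ i < 2 * s + 1,
      subdivPath s huv i = x ∧ subdivPath s huv (i + 1) = y := by
  rcases x with u | ⟨⟨⟨a, b⟩, hab⟩, k⟩ <;>
    rcases y with v | ⟨⟨⟨a', b'⟩, hab'⟩, l⟩
  · obtain ⟨rfl, huv⟩ := hxy
    exact ⟨u, v, huv, 0, by omega, rfl, subdivPath_of_le huv le_rfl⟩
  · obtain ⟨rfl, hl⟩ := hxy
    refine ⟨u, a', G.symm _ _ hab', 0, by omega, rfl, ?_⟩
    exact subdivPath_two_mul_add_one _ (k := 0) l (by omega)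
  · obtain ⟨rfl, hk⟩ := hxy
    refine ⟨a, v, hab, 2 * k + 2, by omega, subdivPath_two_mul_add_two hab k, ?_⟩
    exact subdivPath_of_le hab (by omega)
  · obtain ⟨rfl, rfl, hkl | hkl⟩ := hxy
    · refine ⟨b', a', hab, 2 * k + 2, by omega, subdivPath_two_mul_add_two hab k, ?_⟩
      exact subdivPath_two_mul_add_one hab (k := k + 1) l (by omega)
    · exact ⟨a', b', hab', 2 * l + 1, by omega, subdivPath_two_mul_add_one hab' k (by omega),
        subdivPath_two_mul_add_two hab' l⟩

end subdivPath

theorem homTo_subdiv_of_walkSeqs {s : ℕ} {f : G.V → H.V} {W : G.V → G.V → ℕ → H.V}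
    (hW : ∀ u v, G.Adj u v → H.IsWalkSeq (2 * s + 1) (f u) (f v) (W u v))
    (hW_reverse : ∀ u v, G.Adj u v → ∀ i ≤ 2 * s + 1, W v u i = W u v (2 * s + 1 - i)) :
    (G.subdiv s).homTo H := by
  let F : (G.subdiv s).V → H.V := Sum.elim f fun x => W x.1.1.1 x.1.1.2 (2 * x.2 + 2)
  have hF : ∀ u v (huv : G.Adj u v), ∀ i ≤ 2 * s + 1, F (subdivPath s huv i) = W u v i := by
    intro u v huv i hi
    rcases i with _ | i
    · exact (hW u v huv).zero.symm
    obtain ⟨k, rfl | rfl⟩ := Nat.even_or_odd' i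
    · rcases Nat.lt_or_ge k s with hk | hk
      · rw [subdivPath_two_mul_add_one huv ⟨s - 1 - k, by omega⟩ (by simp; omega)]
        show W v u (2 * (s - 1 - k) + 2) = W u v (2 * k + 1)
        rw [hW_reverse u v huv _ (by omega)]
        congr 1
        omega
      · rw [subdivPath_of_le huv (by omega), show 2 * k + 1 = 2 * s + 1 by omega]
        exact (hW u v huv).last.symm
    · exact congrArg F (subdivPath_two_mul_add_two huv ⟨k, by omega⟩)
  refine ⟨F, fun x y hxy => ?_⟩
  obtain ⟨u, v, huv, i, hi, rfl, rfl⟩ := exists_subdivPath_of_adj hxy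
  rw [hF u v huv i hi.le, hF u v huv (i + 1) hi]
  exact (hW u v huv).adj i hi

end SimpleGraphS

open SimpleGraphS

/-- If `2s+1 < og(H)` then `S_{2s+1}(G) → H` iff `G → H^{2s+1}`. -/
theorem subdiv_hom_iff_hom_pow (G H : SimpleGraphS) (s : ℕ)
    (h : H.ltOddGirth (2 * (s : ℚ) + 1)) :
    (G.subdiv s).homTo H ↔ G.homTo (H.pow (2 * s + 1)) := by
  constructor
  · rintro ⟨g, hg⟩
    refine ⟨g ∘ Sum.inl, fun u v huv => walkLen_iff_exists_isWalkSeq.2 ?_⟩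
    exact ⟨g ∘ subdivPath s huv, (isWalkSeq_subdivPath huv).map hg⟩
  · rintro ⟨f, hf⟩
    have hodd : H.ltOddGirth ((2 * s + 1 : ℕ) : ℚ) := by exact_mod_cast h
    have hloopless : ∀ u v, G.Adj u v → u ≠ v := by
      rintro u _ huu rfl
      exact not_walkLen_self_of_ltOddGirth (odd_two_mul_add_one s) hodd (f u) (hf u u huu)
    obtain ⟨W, hW, hW_reverse⟩ := exists_walkSeqs_reverse_eq hf
    exact homTo_subdiv_of_walkSeqs hW fun u v huv => hW_reverse u v (hloopless u v huv)
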